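/- Early failure detection is sound: if during the saturation procedure some saturated partially mapped BGP (P', ν) is reached (via a chain of epg applications starting from (P, ∅)) with (P')~ ⊄ G, then C, G ⊭ Compl(P), i.e., there exists a valid extension pair (G, G') ⊨ C with ⟦P⟧_{G'} ≠ ⟦P⟧_G. -/
import Mathlib


/-- Constants (IRIs/literals) -/
abbrev Const := ℕ
/-- Variables -/
abbrev Var := ℕ

/-- A term is a constant or a variable. -/
inductive Term where
  | c : Const → Term
  | v : Var → Term
deriving DecidableEq

/-- Triple pattern -/
abbrev TP := Term × Term × Term
/-- Basic graph pattern (also used for graphs, as sets of ground triple patterns) -/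
abbrev BGP := Set TP
/-- (Partial) mapping from variables to constants -/
abbrev Mapping := Var → Option Const

def termVars : Term → Set Var
  | .c _ => ∅
  | .v x => {x}

def tpVars (t : TP) : Set Var := termVars t.1 ∪ termVars t.2.1 ∪ termVars t.2.2

def bgpVars (P : BGP) : Set Var := ⋃ t ∈ P, tpVars t

def termConsts : Term → Set Const
  | .c a => {a}
  | .v _ => ∅

def tpConsts (t : TP) : Set Const := termConsts t.1 ∪ termConsts t.2.1 ∪ termConsts t.2.2

def bgpConsts (P : BGP) : Set Const := ⋃ t ∈ P, tpConsts t

/-- A graph is a BGP all of whose triples are ground. -/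
def GroundBGP (P : BGP) : Prop := ∀ t ∈ P, tpVars t = ∅

def applyTerm (μ : Mapping) : Term → Term
  | .c a => .c a
  | .v x =>
    match μ x with
    | some a => .c a
    | none => .v x

def applyTP (μ : Mapping) (t : TP) : TP :=
  (applyTerm μ t.1, applyTerm μ t.2.1, applyTerm μ t.2.2)

def applyBGP (μ : Mapping) (P : BGP) : BGP := applyTP μ '' P

/-- Domain of a mapping -/
def mdom (μ : Mapping) : Set Var := {x | μ x ≠ none}

/-- Evaluation of a BGP over a graph: ⟦P⟧_G = {μ | dom(μ) = var(P), μP ⊆ G}. -/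
def bgpEval (P G : BGP) : Set Mapping := {μ | mdom μ = bgpVars P ∧ applyBGP μ P ⊆ G}

/-- A completeness statement Compl(P_C). -/
structure CS where
  pat : BGP

/-- The CONSTRUCT query associated to a completeness statement. -/
def constructQ (C : CS) (G : BGP) : BGP := ⋃ μ ∈ bgpEval C.pat G, applyBGP μ C.pat

/-- Transfer operator T_𝒞. -/
def transfer (𝒞 : Set CS) (G : BGP) : BGP := ⋃ C ∈ 𝒞, constructQ C G

/-- (G, G') is a valid extension pair wrt 𝒞. -/
def Valid (𝒞 : Set CS) (G G' : BGP) : Prop :=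
  G ⊆ G' ∧ GroundBGP G' ∧ transfer 𝒞 G' ⊆ G

/-- 𝒞, G ⊨ Compl(P). -/
def Entails (𝒞 : Set CS) (G : BGP) (P : BGP) : Prop :=
  ∀ G', Valid 𝒞 G G' → bgpEval P G' = bgpEval P G

def emptyMap : Mapping := fun _ => none

/-- Union of two mappings (left-biased; used on mappings with disjoint domains). -/
def munion (μ ν : Mapping) : Mapping := fun x => (μ x).orElse (fun _ => ν x)

/-- Partially mapped BGP -/
abbrev PMBGP := BGP × Mapping

/-- Evaluation of a partially mapped BGP: ⟦(P, ν)⟧_G = {ν ∪ ρ | ρ ∈ ⟦P⟧_G}. -/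
def evalPM (pm : PMBGP) (G : BGP) : Set Mapping :=
  {σ | ∃ ρ ∈ bgpEval pm.1 G, σ = munion pm.2 ρ}

def evalPMSet (S : Set PMBGP) (G : BGP) : Set Mapping := ⋃ pm ∈ S, evalPM pm G

/-- S ≡_{𝒞,G} S' : equal evaluations over every valid extension pair. -/
def EquivCG (𝒞 : Set CS) (G : BGP) (S S' : Set PMBGP) : Prop :=
  ∀ G', Valid 𝒞 G G' → evalPMSet S G' = evalPMSet S' G'

/-- The freeze mapping, sending each variable to a (fresh) constant. -/
def freezeMap (frz : Var → Const) : Mapping := fun x => some (frz x)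

/-- frz is a genuine freeze mapping: injective and its values are fresh. -/
def Fresh (frz : Var → Const) (𝒞 : Set CS) (G P : BGP) : Prop :=
  Function.Injective frz ∧
    ∀ x, frz x ∉ bgpConsts G ∪ bgpConsts P ∪ ⋃ C ∈ 𝒞, bgpConsts C.pat

/-- Crucial part: cruc(P, 𝒞, G) = P ∩ id̃⁻¹(T_𝒞(P̃ ∪ G)). -/
def cruc (P : BGP) (𝒞 : Set CS) (G : BGP) (frz : Var → Const) : BGP :=
  {t | t ∈ P ∧ applyTP (freezeMap frz) t ∈ transfer 𝒞 (applyBGP (freezeMap frz) P ∪ G)}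

/-- Equivalent partial grounding operator. -/
def epg (pm : PMBGP) (𝒞 : Set CS) (G : BGP) (frz : Var → Const) : Set PMBGP :=
  {q | ∃ μ ∈ bgpEval (cruc pm.1 𝒞 G frz) G, q = (applyBGP μ pm.1, munion pm.2 μ)}

/-- A partially mapped BGP is saturated wrt 𝒞 and G. -/
def Saturated (pm : PMBGP) (𝒞 : Set CS) (G : BGP) (frz : Var → Const) : Prop :=
  epg pm 𝒞 G frz = {pm}

/-- Partially mapped BGPs reachable from (P, ∅) by the saturation algorithm's epg steps. -/
inductive Reach (𝒞 : Set CS) (G : BGP) (frz : Var → Const) (P : BGP) : PMBGP → Prop where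
  | init : Reach 𝒞 G frz P (P, emptyMap)
  | step {pm pm' : PMBGP} : Reach 𝒞 G frz P pm → epg pm 𝒞 G frz ≠ {pm} →
      pm' ∈ epg pm 𝒞 G frz → Reach 𝒞 G frz P pm'

/-- The set Ω of mappings returned by the saturation algorithm sat(P, 𝒞, G). -/
def satSet (𝒞 : Set CS) (G : BGP) (frz : Var → Const) (P : BGP) : Set Mapping :=
  {ν | ∃ P', Reach 𝒞 G frz P (P', ν) ∧ Saturated (P', ν) 𝒞 G frz}

lemma applyTerm_munion (μ ρ : Mapping) (t : Term) :
    applyTerm (munion μ ρ) t = applyTerm ρ (applyTerm μ t) := by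
  cases t with
  | c a => rfl
  | v x =>
    simp only [applyTerm, munion]
    cases h : μ x <;> simp [h, applyTerm]

lemma applyTP_munion (μ ρ : Mapping) (t : TP) :
    applyTP (munion μ ρ) t = applyTP ρ (applyTP μ t) := by
  simp [applyTP, applyTerm_munion]

lemma applyBGP_munion (μ ρ : Mapping) (Q : BGP) :
    applyBGP (munion μ ρ) Q = applyBGP ρ (applyBGP μ Q) := by
  simp only [applyBGP, ← Set.image_comp]
  exact Set.image_congr fun t _ => applyTP_munion μ ρ t

lemma munion_assoc (a b c : Mapping) : munion (munion a b) c = munion a (munion b c) := by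
  funext x
  simp only [munion]
  cases a x <;> rfl

lemma munion_empty_left (ρ : Mapping) : munion emptyMap ρ = ρ := by
  funext x; rfl

lemma mdom_munion (μ ρ : Mapping) : mdom (munion μ ρ) = mdom μ ∪ mdom ρ := by
  ext x
  simp only [mdom, munion, Set.mem_setOf_eq, Set.mem_union]
  cases h : μ x <;> simp [h]

lemma termVars_apply (μ : Mapping) (t : Term) :
    termVars (applyTerm μ t) = termVars t \ mdom μ := by
  cases t with
  | c a => simp [applyTerm, termVars]
  | v x =>
    simp only [applyTerm]
    cases h : μ x with
    | none =>
      simp only [termVars]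
      ext y
      simp only [Set.mem_diff, Set.mem_singleton_iff]
      constructor
      · rintro rfl; exact ⟨rfl, by simp [mdom, h]⟩
      · exact fun hy => hy.1
    | some a =>
      simp only [termVars]
      symm
      rw [Set.diff_eq_empty]
      intro y hy
      simp only [Set.mem_singleton_iff] at hy
      subst hy
      simp [mdom, h]

lemma tpVars_apply (μ : Mapping) (t : TP) :
    tpVars (applyTP μ t) = tpVars t \ mdom μ := by
  simp [tpVars, applyTP, termVars_apply, Set.union_diff_distrib]

lemma bgpVars_apply (μ : Mapping) (Q : BGP) :
    bgpVars (applyBGP μ Q) = bgpVars Q \ mdom μ := by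
  ext x
  simp only [bgpVars, applyBGP, Set.mem_iUnion, Set.mem_diff, Set.mem_image]
  constructor
  · rintro ⟨t, ⟨⟨s, hs, rfl⟩, hx⟩⟩
    rw [tpVars_apply] at hx
    exact ⟨⟨s, ⟨hs, hx.1⟩⟩, hx.2⟩
  · rintro ⟨⟨t, ht, hx⟩, hnd⟩
    exact ⟨applyTP μ t, ⟨t, ht, rfl⟩, by rw [tpVars_apply]; exact ⟨hx, hnd⟩⟩

lemma bgpVars_mono {Q Q' : BGP} (h : Q ⊆ Q') : bgpVars Q ⊆ bgpVars Q' := by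
  intro x hx
  simp only [bgpVars, Set.mem_iUnion] at hx ⊢
  obtain ⟨t, ht, hxt⟩ := hx
  exact ⟨t, h ht, hxt⟩

lemma transfer_subset (𝒞 : Set CS) (G'' : BGP) : transfer 𝒞 G'' ⊆ G'' := by
  intro s hs
  simp only [transfer, constructQ, Set.mem_iUnion] at hs
  obtain ⟨C, _, μ, hμ, hsμ⟩ := hs
  exact hμ.2 hsμ

/-- Key invariant for reachable partially mapped BGPs. -/
lemma reach_eval (𝒞 : Set CS) (G : BGP) (frz : Var → Const) (P : BGP) (pm : PMBGP)
    (h : Reach 𝒞 G frz P pm) :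
    ∀ G'' ρ, ρ ∈ bgpEval pm.1 G'' →
      munion pm.2 ρ ∈ bgpEval P G'' ∧
        applyBGP (munion pm.2 ρ) P = applyBGP ρ pm.1 := by
  induction h with
  | init =>
    intro G'' ρ hρ
    simpa [munion_empty_left] using hρ
  | @step pm pm' _ _ hmem ih =>
    intro G'' ρ hρ
    obtain ⟨μ, hμ, rfl⟩ := hmem
    obtain ⟨hdom, happ⟩ := hρ
    dsimp only at hdom happ ⊢
    have hdomμ : mdom μ = bgpVars (cruc pm.1 𝒞 G frz) := hμ.1
    have hcr : cruc pm.1 𝒞 G frz ⊆ pm.1 := fun t ht => ht.1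
    have hsub : mdom μ ⊆ bgpVars pm.1 := hdomμ ▸ bgpVars_mono hcr
    have hρ' : munion μ ρ ∈ bgpEval pm.1 G'' := by
      constructor
      · rw [mdom_munion, hdom, bgpVars_apply]
        rw [Set.union_diff_self]
        exact Set.union_eq_self_of_subset_left hsub
      · rw [applyBGP_munion]
        exact happ
    obtain ⟨h1, h2⟩ := ih G'' (munion μ ρ) hρ'
    refine ⟨by simpa [munion_assoc] using h1, ?_⟩
    rw [munion_assoc, h2, applyBGP_munion]

lemma mdom_eq_empty {μ : Mapping} (h : mdom μ = ∅) : ∀ x, μ x = none := by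
  intro x
  by_contra hx
  exact absurd (Set.eq_empty_iff_forall_notMem.1 h x) (by simpa [mdom] using hx)

lemma applyTP_of_ground {μ : Mapping} (hμ : ∀ x, μ x = none) (t : TP) :
    applyTP μ t = t := by
  have hter : ∀ s : Term, applyTerm μ s = s := by
    intro s; cases s with
    | c a => rfl
    | v x => simp [applyTerm, hμ x]
  simp [applyTP, hter]

lemma tpVars_empty_freeze {frz : Var → Const} {t : TP} (ht : tpVars t = ∅) :
    applyTP (freezeMap frz) t = t := by
  obtain ⟨a, b, c⟩ := t
  simp only [tpVars, termVars, Set.union_empty_iff] at ht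
  have h : ∀ s : Term, termVars s = ∅ → applyTerm (freezeMap frz) s = s := by
    intro s hs
    cases s with
    | c x => rfl
    | v x => simp [termVars] at hs
  simp only [applyTP]
  rw [h a ht.1.1, h b ht.1.2, h c ht.2]

/-- Early failure detection is sound: if a saturated (P', ν) is reached
from (P, ∅) with (P')~ ⊄ G, then 𝒞, G ⊭ Compl(P). -/
theorem stmt14 (𝒞 : Set CS) (G : BGP) (frz : Var → Const) (P : BGP)
    (hg : GroundBGP G) (hfresh : Fresh frz 𝒞 G P)
    (P' : BGP) (ν : Mapping)
    (hreach : Reach 𝒞 G frz P (P', ν)) (hsat : Saturated (P', ν) 𝒞 G frz)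
    (hnotin : ¬ applyBGP (freezeMap frz) P' ⊆ G) :
    ∃ G', Valid 𝒞 G G' ∧ bgpEval P G' ≠ bgpEval P G := by
  classical
  -- From saturation, extract μ₀ witnessing (P', ν) ∈ epg (P', ν).
  have hself : (P', ν) ∈ epg (P', ν) 𝒞 G frz := by
    rw [hsat]; rfl
  obtain ⟨μ₀, hμ₀, heq⟩ := hself
  have hP'eq : applyBGP μ₀ P' = P' := (Prod.mk.injEq _ _ _ _ ▸ heq).1.symm
  have hdomμ₀ : mdom μ₀ = bgpVars (cruc P' 𝒞 G frz) := hμ₀.1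
  -- μ₀ has empty domain
  have hwd : mdom μ₀ = ∅ := by
    by_contra hne
    obtain ⟨x, hx⟩ := Set.nonempty_iff_ne_empty.2 hne
    have hxcr : x ∈ bgpVars (cruc P' 𝒞 G frz) := hdomμ₀ ▸ hx
    have hxP' : x ∈ bgpVars P' := bgpVars_mono (fun t ht => ht.1) hxcr
    have : x ∈ bgpVars (applyBGP μ₀ P') := by rw [hP'eq]; exact hxP'
    rw [bgpVars_apply] at this
    exact this.2 hx
  have hμ₀none : ∀ x, μ₀ x = none := mdom_eq_empty hwd
  -- cruc P' ⊆ G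
  have hcrG : cruc P' 𝒞 G frz ⊆ G := by
    intro t ht
    have : applyTP μ₀ t ∈ G := hμ₀.2 ⟨t, ht, rfl⟩
    rwa [applyTP_of_ground hμ₀none] at this
  -- The counterexample graph
  set G' : BGP := applyBGP (freezeMap frz) P' ∪ G with hG'
  have hGsub : G ⊆ G' := Set.subset_union_right
  have hground : GroundBGP G' := by
    intro t ht
    rcases ht with ⟨s, _, rfl⟩ | ht
    · rw [tpVars_apply]
      have : mdom (freezeMap frz) = Set.univ := by
        ext x; simp [mdom, freezeMap]
      simp [this]
    · exact hg t ht
  have htrans : transfer 𝒞 G' ⊆ G := by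
    intro s hs
    rcases transfer_subset 𝒞 G' hs with ⟨t, htP', rfl⟩ | hsG
    · -- s = t~ with t ∈ P'; then t ∈ cruc ⊆ G and t is ground
      have htc : t ∈ cruc P' 𝒞 G frz := ⟨htP', hs⟩
      have htG : t ∈ G := hcrG htc
      rw [tpVars_empty_freeze (hg t htG)]
      exact htG
    · exact hsG
  have hvalid : Valid 𝒞 G G' := ⟨hGsub, hground, htrans⟩
  -- The distinguishing mapping
  set ρ : Mapping := fun x => if x ∈ bgpVars P' then some (frz x) else none with hρdef
  have hρfr : ∀ t ∈ P', applyTP ρ t = applyTP (freezeMap frz) t := by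
    intro t ht
    have h : ∀ s : Term, termVars s ⊆ tpVars t →
        applyTerm ρ s = applyTerm (freezeMap frz) s := by
      intro s hst
      cases s with
      | c a => rfl
      | v x =>
        have hx : x ∈ bgpVars P' := by
          simp only [bgpVars, Set.mem_iUnion]
          exact ⟨t, ht, hst (by simp [termVars])⟩
        simp [applyTerm, hρdef, hx, freezeMap]
    obtain ⟨a, b, c⟩ := t
    simp only [applyTP]
    rw [h a (fun y hy => Set.mem_union_left _ (Set.mem_union_left _ hy)),
      h b (fun y hy => Set.mem_union_left _ (Set.mem_union_right _ hy)),
      h c (fun y hy => Set.mem_union_right _ hy)]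
  have hρapp : applyBGP ρ P' = applyBGP (freezeMap frz) P' :=
    Set.image_congr hρfr
  have hρeval : ρ ∈ bgpEval P' G' := by
    constructor
    · ext x
      simp only [mdom, hρdef, Set.mem_setOf_eq]
      by_cases hx : x ∈ bgpVars P' <;> simp [hx]
    · rw [hρapp]; exact Set.subset_union_left
  obtain ⟨hmem, happeq⟩ := reach_eval 𝒞 G frz P (P', ν) hreach G' ρ hρeval
  refine ⟨G', hvalid, ?_⟩
  intro habs
  apply hnotin
  have hσG : munion ν ρ ∈ bgpEval P G := habs ▸ hmem
  have : applyBGP (munion ν ρ) P ⊆ G := hσG.2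
  rw [happeq, hρapp] at this
  exact this
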